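/- arXiv:1811.01760 — 3 statements merged into one kernel-verified Lean document; each statement's English description precedes it below -/
import Mathlib

section
/- Let Q : ℝ^m → H be a compact (bounded) operator, S the closure of the range of Q, P the orthogonal projection onto S, and M = P T_x P. Let r = rank((Q*Q)^†) and R ∈ ℝ^{m×r} a matrix with R R* = (Q*Q)^† (Moore–Penrose pseudoinverse). Set K̃ = R* Q* S_x* S_x Q R ∈ ℝ^{r×r} and b = R* Q* S_x* ȳ ∈ ℝ^r. Then for every t ≥ 1 the projected-KCGM iterate ω_t = argmin_{ω ∈ K_t(M, P S_x* ȳ)} ‖M ω − P S_x* ȳ‖_H equals Q R a_t, where a_t = argmin_{a ∈ K_t(K̃, b)} ‖K̃ a − b‖₂ and K_t(K̃, b) = span{b, K̃b, …, K̃^{t−1}b}. In particular, for any polynomial q one has q(M) P S_x* ȳ = Q R q(K̃) b and ‖q(M) P S_x* ȳ‖_H = ‖q(K̃) b‖₂. -/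
/-!
Put `G := Q R`. From `R R* = (Q*Q)†` and the injectivity of `R`, `G* G = 1`, so `G` is an
isometry; since `Q (Q*Q)† Q*Q = Q` and `range P = range Q` (a finite-dimensional range is
closed), also `G G* = P`. Hence `M G = G K̃` and `P S_x* ȳ = G b`: the isometry `G` maps
`K_t(K̃, b)` onto `K_t(M, P S_x* ȳ)`, `q(K̃) b` to `q(M) P S_x* ȳ`, and the residual
`K̃ a - b` to `M (G a) - P S_x* ȳ`, so the two least-squares problems correspond.
-/

open Polynomial RealInnerProductSpace

noncomputable section

open ContinuousLinearMap
open scoped InnerProduct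

section Krylov

variable {𝕜 M M₂ : Type*} [CommSemiring 𝕜] [AddCommGroup M] [TopologicalSpace M] [Module 𝕜 M]
  [AddCommGroup M₂] [TopologicalSpace M₂] [Module 𝕜 M₂]
  {A : M₂ →L[𝕜] M₂} {B : M →L[𝕜] M} {G : M →L[𝕜] M₂}

def krylovSubspace (A : M →L[𝕜] M) (b : M) (t : ℕ) : Submodule 𝕜 M :=
  Submodule.span 𝕜 {w | ∃ k < t, w = (A ^ k) b}

theorem pow_comp_eq_comp_pow (h : A ∘L G = G ∘L B) (k : ℕ) : (A ^ k) ∘L G = G ∘L (B ^ k) := by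
  induction k with
  | zero => rfl
  | succ k ih =>
    rw [pow_succ, pow_succ, mul_def, mul_def, ContinuousLinearMap.comp_assoc, h,
      ← ContinuousLinearMap.comp_assoc, ih, ContinuousLinearMap.comp_assoc]

theorem aeval_comp_eq_comp_aeval [IsTopologicalAddGroup M] [ContinuousConstSMul 𝕜 M]
    [IsTopologicalAddGroup M₂] [ContinuousConstSMul 𝕜 M₂] (h : A ∘L G = G ∘L B) (q : 𝕜[X]) :
    aeval A q ∘L G = G ∘L aeval B q := by
  induction q using Polynomial.induction_on' with
  | add p q hp hq => rw [map_add, map_add, ContinuousLinearMap.add_comp, comp_add, hp, hq]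
  | monomial k c =>
    simp only [aeval_monomial, Algebra.algebraMap_eq_smul_one, smul_mul_assoc, one_mul,
      ContinuousLinearMap.smul_comp, comp_smul, pow_comp_eq_comp_pow h]

theorem krylovSubspace_map (h : A ∘L G = G ∘L B) (b : M) (t : ℕ) :
    (krylovSubspace B b t).map (G : M →ₗ[𝕜] M₂) = krylovSubspace A (G b) t := by
  have hpow (k : ℕ) : (A ^ k) (G b) = G ((B ^ k) b) := congr($(pow_comp_eq_comp_pow h k) b)
  rw [krylovSubspace, Submodule.map_span]
  congr 1
  ext w
  constructor
  · rintro ⟨_, ⟨k, hk, rfl⟩, rfl⟩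
    exact ⟨k, hk, (hpow k).symm⟩
  · rintro ⟨k, hk, rfl⟩
    exact ⟨_, ⟨k, hk, rfl⟩, (hpow k).symm⟩

end Krylov

section ResidualMinimizer

variable {𝕜 E F : Type*} [Ring 𝕜] [SeminormedAddCommGroup E] [Module 𝕜 E]
  [SeminormedAddCommGroup F] [Module 𝕜 F]

def IsResidualMinimizer (A : E → E) (b : E) (K : Set E) (a : E) : Prop :=
  a ∈ K ∧ ∀ a' ∈ K, ‖A a - b‖ ≤ ‖A a' - b‖

theorem isResidualMinimizer_map_iff {G : E →ₗ[𝕜] F} (hG : ∀ v, ‖G v‖ = ‖v‖) {A : F → F}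
    {B : E → E} (h : ∀ v, A (G v) = G (B v)) (b : E) (K : Submodule 𝕜 E) (ω : F) :
    IsResidualMinimizer A (G b) (K.map G) ω ↔ ∃ a, IsResidualMinimizer B b K a ∧ G a = ω := by
  have hres (a : E) : ‖A (G a) - G b‖ = ‖B a - b‖ := by rw [h, ← map_sub, hG]
  constructor
  · rintro ⟨⟨a, ha, rfl⟩, hmin⟩
    refine ⟨a, ⟨ha, fun a' ha' => ?_⟩, rfl⟩
    simpa only [hres] using hmin (G a') ⟨a', ha', rfl⟩
  · rintro ⟨a, ⟨ha, hmin⟩, rfl⟩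
    refine ⟨⟨a, ha, rfl⟩, ?_⟩
    rintro _ ⟨a', ha', rfl⟩
    simpa only [hres] using hmin a' ha'

end ResidualMinimizer

theorem ContinuousLinearMap.comp_eq_self_of_range_le {𝕜 M M₁ M₂ : Type*} [Semiring 𝕜]
    [AddCommMonoid M] [TopologicalSpace M] [Module 𝕜 M] [AddCommMonoid M₁] [TopologicalSpace M₁]
    [Module 𝕜 M₁] [AddCommMonoid M₂] [TopologicalSpace M₂] [Module 𝕜 M₂]
    {T : M →L[𝕜] M} {Q : M₁ →L[𝕜] M} {P : M₂ →L[𝕜] M} (hTQ : T ∘L Q = Q)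
    (h : LinearMap.range (P : M₂ →ₗ[𝕜] M) ≤ LinearMap.range (Q : M₁ →ₗ[𝕜] M)) : T ∘L P = P := by
  ext w
  obtain ⟨u, hu⟩ := h ⟨w, rfl⟩
  rw [comp_apply, ← coe_coe P, ← hu, coe_coe, ← comp_apply, hTQ]

namespace ContinuousLinearMap

variable {𝕜 D E F : Type*} [RCLike 𝕜]
  [NormedAddCommGroup D] [InnerProductSpace 𝕜 D] [CompleteSpace D]
  [NormedAddCommGroup E] [InnerProductSpace 𝕜 E] [CompleteSpace E]
  [NormedAddCommGroup F] [InnerProductSpace 𝕜 F] [CompleteSpace F]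

theorem comp_comp_adjoint_comp_self_eq_self {Q : E →L[𝕜] F} {Ndag : E →L[𝕜] E}
    (h : (Q† ∘L Q) ∘L (Ndag ∘L (Q† ∘L Q)) = Q† ∘L Q) : Q ∘L (Ndag ∘L (Q† ∘L Q)) = Q := by
  ext v
  have hker : Ndag (adjoint Q (Q v)) - v ∈ (Q† ∘L Q).ker := by
    simpa [sub_eq_zero] using congr($h v)
  rw [ker_adjoint_comp_self, LinearMap.mem_ker, coe_coe, map_sub, sub_eq_zero] at hker
  exact hker

theorem adjoint_comp_comp_eq_one_of_injective {R : D →L[𝕜] E} (hR : Function.Injective R)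
    {N : E →L[𝕜] E} (hN : IsSelfAdjoint N)
    (h : (R ∘L R†) ∘L (N ∘L (R ∘L R†)) = R ∘L R†) : R† ∘L (N ∘L R) = 1 := by
  have h₁ : (R† ∘L (N ∘L R)) ∘L R† = R† := cancel_left hR h
  have h₂ : R ∘L (R† ∘L (N ∘L R)) = R := by
    simpa only [adjoint_comp, adjoint_adjoint, hN.adjoint_eq, ContinuousLinearMap.comp_assoc]
      using congr(($h₁)†)
  exact cancel_left hR (h₂.trans R.comp_id.symm)

theorem comp_adjoint_eq_of_isSelfAdjoint {G : D →L[𝕜] F} {P : F →L[𝕜] F} (hP : IsSelfAdjoint P)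
    (hPG : P ∘L G = G) (hGP : (G ∘L G†) ∘L P = P) : G ∘L G† = P :=
  calc G ∘L G† = (P ∘L (G ∘L G†))† := by
        rw [← ContinuousLinearMap.comp_assoc, hPG, adjoint_comp, adjoint_adjoint]
    _ = (G ∘L G†) ∘L P := by rw [adjoint_comp, adjoint_comp, adjoint_adjoint, hP.adjoint_eq]
    _ = P := hGP

theorem comp_adjoint_eq_of_range_eq_topologicalClosure [FiniteDimensional 𝕜 E] {Q : E →L[𝕜] F}
    {R : D →L[𝕜] E} {P : F →L[𝕜] F} (hPsa : IsSelfAdjoint P) (hPidem : P ∘L P = P)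
    (hPrange : LinearMap.range (P : F →ₗ[𝕜] F) =
      (LinearMap.range (Q : E →ₗ[𝕜] F)).topologicalClosure)
    (hpinv : (Q† ∘L Q) ∘L ((R ∘L R†) ∘L (Q† ∘L Q)) = Q† ∘L Q) :
    (Q ∘L R) ∘L (Q ∘L R)† = P := by
  have hrange : LinearMap.range (P : F →ₗ[𝕜] F) = LinearMap.range (Q : E →ₗ[𝕜] F) :=
    hPrange.trans (Submodule.closed_of_finiteDimensional _).submodule_topologicalClosure_eq
  refine comp_adjoint_eq_of_isSelfAdjoint hPsa ?_ (comp_eq_self_of_range_le ?_ hrange.le)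
  · rw [← ContinuousLinearMap.comp_assoc, comp_eq_self_of_range_le hPidem hrange.ge]
  · rw [adjoint_comp]
    exact comp_comp_adjoint_comp_self_eq_self hpinv

end ContinuousLinearMap

theorem projected_kcgm_numerical_realization_general
    {H : Type*} [NormedAddCommGroup H] [InnerProductSpace ℝ H] [CompleteSpace H]
    (n m r : ℕ)
    -- the sample points and sampling operator
    (ybar : EuclideanSpace ℝ (Fin n))
    (Sx : H →L[ℝ] EuclideanSpace ℝ (Fin n))
    -- Q and the projection P onto the closure of its range
    (Q : EuclideanSpace ℝ (Fin m) →L[ℝ] H)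
    (P : H →L[ℝ] H) (hPsa : IsSelfAdjoint P) (hPidem : P.comp P = P)
    (hPrange : LinearMap.range (P : H →ₗ[ℝ] H) = (LinearMap.range (Q : EuclideanSpace ℝ (Fin m) →ₗ[ℝ] H)).topologicalClosure)
    -- N = Q*Q and its Moore–Penrose pseudoinverse N†
    (N Ndag : EuclideanSpace ℝ (Fin m) →L[ℝ] EuclideanSpace ℝ (Fin m))
    (hN : N = (ContinuousLinearMap.adjoint Q).comp Q)
    (hPen1 : N.comp (Ndag.comp N) = N) (hPen2 : Ndag.comp (N.comp Ndag) = Ndag)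
    -- R with R R* = N†, of full column rank r
    (R : EuclideanSpace ℝ (Fin r) →L[ℝ] EuclideanSpace ℝ (Fin m))
    (hRinj : Function.Injective R)
    (hRR : R.comp (ContinuousLinearMap.adjoint R) = Ndag)
    -- the operators of the algorithm
    (Tx : H →L[ℝ] H) (hTx : Tx = (ContinuousLinearMap.adjoint Sx).comp Sx)
    (Mo : H →L[ℝ] H) (hMo : Mo = P.comp (Tx.comp P))
    (bH : H) (hbH : bH = P ((ContinuousLinearMap.adjoint Sx) ybar))
    (Ktil : EuclideanSpace ℝ (Fin r) →L[ℝ] EuclideanSpace ℝ (Fin r))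
    (hKtil : Ktil = (ContinuousLinearMap.adjoint R).comp
      ((ContinuousLinearMap.adjoint Q).comp
        ((ContinuousLinearMap.adjoint Sx).comp (Sx.comp (Q.comp R)))))
    (b : EuclideanSpace ℝ (Fin r))
    (hb : b = (ContinuousLinearMap.adjoint R)
      ((ContinuousLinearMap.adjoint Q) ((ContinuousLinearMap.adjoint Sx) ybar))) :
    (∀ t : ℕ, 1 ≤ t →
      -- every Krylov minimizer of the Euclidean problem yields a Krylov minimizer
      -- of the Hilbertian problem, and conversely every Hilbertian minimizer arises
      -- in this way
      ((∀ a : EuclideanSpace ℝ (Fin r),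
          a ∈ Submodule.span ℝ {w | ∃ k < t, w = (Ktil ^ k) b} →
          (∀ a' ∈ Submodule.span ℝ {w | ∃ k < t, w = (Ktil ^ k) b},
            ‖Ktil a - b‖ ≤ ‖Ktil a' - b‖) →
          (Q (R a) ∈ Submodule.span ℝ {w | ∃ k < t, w = (Mo ^ k) bH} ∧
            ∀ v ∈ Submodule.span ℝ {w | ∃ k < t, w = (Mo ^ k) bH},
              ‖Mo (Q (R a)) - bH‖ ≤ ‖Mo v - bH‖)) ∧
        (∀ ωt : H,
          ωt ∈ Submodule.span ℝ {w | ∃ k < t, w = (Mo ^ k) bH} →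
          (∀ v ∈ Submodule.span ℝ {w | ∃ k < t, w = (Mo ^ k) bH},
            ‖Mo ωt - bH‖ ≤ ‖Mo v - bH‖) →
          ∃ a : EuclideanSpace ℝ (Fin r),
            a ∈ Submodule.span ℝ {w | ∃ k < t, w = (Ktil ^ k) b} ∧
            (∀ a' ∈ Submodule.span ℝ {w | ∃ k < t, w = (Ktil ^ k) b},
              ‖Ktil a - b‖ ≤ ‖Ktil a' - b‖) ∧
            ωt = Q (R a)))) ∧
    (∀ q : Polynomial ℝ,
      (Polynomial.aeval Mo q) bH = Q (R ((Polynomial.aeval Ktil q) b)) ∧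
      ‖(Polynomial.aeval Mo q) bH‖ = ‖(Polynomial.aeval Ktil q) b‖) := by
  subst hN hRR
  set G := Q ∘L R with hG
  have hGG : G† ∘L G = 1 := by
    rw [hG, adjoint_comp]
    simpa only [ContinuousLinearMap.comp_assoc] using adjoint_comp_comp_eq_one_of_injective hRinj
      (isSelfAdjoint_iff'.mpr (by rw [adjoint_comp, adjoint_adjoint])) hPen2
  have hGP : G ∘L G† = P :=
    comp_adjoint_eq_of_range_eq_topologicalClosure hPsa hPidem hPrange hPen1
  have hPG : P ∘L G = G := by rw [← hGP, ContinuousLinearMap.comp_assoc, hGG, one_def, comp_id]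
  have hMG : Mo ∘L G = G ∘L Ktil :=
    calc Mo ∘L G = P ∘L Tx ∘L (P ∘L G) := by rw [hMo]; rfl
      _ = (G ∘L G†) ∘L Tx ∘L G := by rw [hPG, hGP]
      _ = G ∘L Ktil := by rw [hKtil, hTx, hG, adjoint_comp]; rfl
  have hbG : bH = G b := by rw [hbH, hb, ← hGP, hG, adjoint_comp]; rfl
  have hnorm : ∀ v, ‖G v‖ = ‖v‖ := (norm_map_iff_adjoint_comp_self G).mpr hGG
  subst hbG
  have hmin (t : ℕ) (ω : H) := isResidualMinimizer_map_iff hnorm (fun v => congr($hMG v)) b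
    (krylovSubspace Ktil b t) ω
  simp only [krylovSubspace_map hMG] at hmin
  refine ⟨fun t _ => ⟨fun a ha hmin_a => (hmin t _).mpr ⟨a, ⟨ha, hmin_a⟩, rfl⟩,
    fun ω hω hmin_ω => ?_⟩, fun q => ?_⟩
  · obtain ⟨a, ⟨ha, hmin_a⟩, rfl⟩ := (hmin t ω).mp ⟨hω, hmin_ω⟩
    exact ⟨a, ha, hmin_a, rfl⟩
  · have hq : aeval Mo q (G b) = G (aeval Ktil q b) := congr($(aeval_comp_eq_comp_aeval hMG q) b)
    exact ⟨hq, by rw [hq, hnorm]⟩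

theorem projected_kcgm_numerical_realization
    {H : Type*} [NormedAddCommGroup H] [InnerProductSpace ℝ H] [CompleteSpace H]
    [SecondCountableTopology H]
    (n m r : ℕ)
    -- the sample points and sampling operator
    (x : Fin n → H) (ybar : EuclideanSpace ℝ (Fin n))
    (Sx : H →L[ℝ] EuclideanSpace ℝ (Fin n))
    (hSx : ∀ (v : H) (i : Fin n), Sx v i = (Real.sqrt n)⁻¹ * ⟪v, x i⟫)
    -- Q and the projection P onto the closure of its range
    (Q : EuclideanSpace ℝ (Fin m) →L[ℝ] H)
    (P : H →L[ℝ] H) (hPsa : IsSelfAdjoint P) (hPidem : P.comp P = P)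
    (hPrange : LinearMap.range (P : H →ₗ[ℝ] H) = (LinearMap.range (Q : EuclideanSpace ℝ (Fin m) →ₗ[ℝ] H)).topologicalClosure)
    -- N = Q*Q and its Moore–Penrose pseudoinverse N†
    (N Ndag : EuclideanSpace ℝ (Fin m) →L[ℝ] EuclideanSpace ℝ (Fin m))
    (hN : N = (ContinuousLinearMap.adjoint Q).comp Q)
    (hPen1 : N.comp (Ndag.comp N) = N) (hPen2 : Ndag.comp (N.comp Ndag) = Ndag)
    (hPen3 : IsSelfAdjoint (N.comp Ndag)) (hPen4 : IsSelfAdjoint (Ndag.comp N))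
    -- R with R R* = N†, of full column rank r
    (R : EuclideanSpace ℝ (Fin r) →L[ℝ] EuclideanSpace ℝ (Fin m))
    (hRinj : Function.Injective R)
    (hRR : R.comp (ContinuousLinearMap.adjoint R) = Ndag)
    -- the operators of the algorithm
    (Tx : H →L[ℝ] H) (hTx : Tx = (ContinuousLinearMap.adjoint Sx).comp Sx)
    (Mo : H →L[ℝ] H) (hMo : Mo = P.comp (Tx.comp P))
    (bH : H) (hbH : bH = P ((ContinuousLinearMap.adjoint Sx) ybar))
    (Ktil : EuclideanSpace ℝ (Fin r) →L[ℝ] EuclideanSpace ℝ (Fin r))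
    (hKtil : Ktil = (ContinuousLinearMap.adjoint R).comp
      ((ContinuousLinearMap.adjoint Q).comp
        ((ContinuousLinearMap.adjoint Sx).comp (Sx.comp (Q.comp R)))))
    (b : EuclideanSpace ℝ (Fin r))
    (hb : b = (ContinuousLinearMap.adjoint R)
      ((ContinuousLinearMap.adjoint Q) ((ContinuousLinearMap.adjoint Sx) ybar))) :
    (∀ t : ℕ, 1 ≤ t →
      -- every Krylov minimizer of the Euclidean problem yields a Krylov minimizer
      -- of the Hilbertian problem, and conversely every Hilbertian minimizer arises
      -- in this way
      ((∀ a : EuclideanSpace ℝ (Fin r),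
          a ∈ Submodule.span ℝ {w | ∃ k < t, w = (Ktil ^ k) b} →
          (∀ a' ∈ Submodule.span ℝ {w | ∃ k < t, w = (Ktil ^ k) b},
            ‖Ktil a - b‖ ≤ ‖Ktil a' - b‖) →
          (Q (R a) ∈ Submodule.span ℝ {w | ∃ k < t, w = (Mo ^ k) bH} ∧
            ∀ v ∈ Submodule.span ℝ {w | ∃ k < t, w = (Mo ^ k) bH},
              ‖Mo (Q (R a)) - bH‖ ≤ ‖Mo v - bH‖)) ∧
        (∀ ωt : H,
          ωt ∈ Submodule.span ℝ {w | ∃ k < t, w = (Mo ^ k) bH} →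
          (∀ v ∈ Submodule.span ℝ {w | ∃ k < t, w = (Mo ^ k) bH},
            ‖Mo ωt - bH‖ ≤ ‖Mo v - bH‖) →
          ∃ a : EuclideanSpace ℝ (Fin r),
            a ∈ Submodule.span ℝ {w | ∃ k < t, w = (Ktil ^ k) b} ∧
            (∀ a' ∈ Submodule.span ℝ {w | ∃ k < t, w = (Ktil ^ k) b},
              ‖Ktil a - b‖ ≤ ‖Ktil a' - b‖) ∧
            ωt = Q (R a)))) ∧
    (∀ q : Polynomial ℝ,
      (Polynomial.aeval Mo q) bH = Q (R ((Polynomial.aeval Ktil q) b)) ∧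
      ‖(Polynomial.aeval Mo q) bH‖ = ‖(Polynomial.aeval Ktil q) b‖) :=
  projected_kcgm_numerical_realization_general n m r ybar Sx Q P hPsa hPidem hPrange N Ndag hN hPen1
    hPen2 R hRinj hRR Tx hTx Mo hMo bH hbH Ktil hKtil b hb
end
end

section
/- Assume the source condition f_H = ℒ^ζ g₀ with ‖g₀‖_ρ ≤ R (ζ ≥ 0, R > 0), and for λ > 0 define ω_⋆^λ = G_λ(T) S_ρ* f_H, where G_λ(u) = 1/u for u ≥ λ and G_λ(u) = 0 for u < λ (functional calculus applied to T). Then: (1) for any a ≤ ζ, ‖ℒ^{−a}(S_ρ ω_⋆^λ − f_H)‖_ρ ≤ R λ^{ζ−a}; (2) ‖T^{a−1/2} ω_⋆^λ‖_H ≤ R λ^{ζ+a−1} if −ζ ≤ a ≤ 1−ζ, and ‖T^{a−1/2} ω_⋆^λ‖_H ≤ R κ^{2(ζ+a−1)} if a ≥ 1−ζ. -/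
/-!
The fractional powers of `T` and `ℒ` and the cut-off `G_λ(T)` act coordinatewise in the singular
system `(e, f, √μ)` of `S_ρ`. Writing `c i = ⟪g₀, f i⟫`, the coordinates of `ω_⋆^λ` are
`μ i ^ (ζ - 1/2) * c i` where `λ ≤ μ i` and `0` elsewhere, so the residual `S_ρ ω_⋆^λ - f_H` has
coordinates `-μ i ^ ζ * c i` exactly where `μ i < λ`. By Parseval on the closed span of `f` and
Bessel's inequality for `g₀`, each bound reduces to a bound on the scalar multipliers:
`μ ^ (ζ - a) ≤ λ ^ (ζ - a)` for `μ < λ`; `μ ^ (ζ + a - 1) ≤ λ ^ (ζ + a - 1)` for `λ ≤ μ` when the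
exponent is nonpositive; and `μ ^ (ζ + a - 1) ≤ κ ^ (2 (ζ + a - 1))` when it is nonnegative, since
`μ i = ‖S_ρ (e i)‖² ≤ κ²` because `‖x‖ ≤ κ` on the support of `ρ_X`.
-/

open MeasureTheory RealInnerProductSpace

noncomputable section

section Parseval

variable {E F ι : Type*} [NormedAddCommGroup E] [InnerProductSpace ℝ E] [CompleteSpace E]
  [NormedAddCommGroup F] [InnerProductSpace ℝ F] {v : ι → E}

open Submodule Set in
theorem Orthonormal.exists_hilbertBasis_topologicalClosure_span (hv : Orthonormal ℝ v) :
    ∃ b : HilbertBasis ι ℝ (span ℝ (range v)).topologicalClosure, ∀ i, (b i : E) = v i := by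
  set K := (span ℝ (range v)).topologicalClosure
  have hvK : ∀ i, v i ∈ K := fun i => le_topologicalClosure _ (subset_span (mem_range_self i))
  have hspan : K.subtype '' span ℝ (range (Set.codRestrict v K hvK)) = span ℝ (range v) := by
    rw [← map_coe, map_span, ← range_comp]
    rfl
  have hdense : Dense (span ℝ (range (Set.codRestrict v K hvK)) : Set K) :=
    Subtype.dense_iff.mpr <| (topologicalClosure_coe _).subset.trans (closure_mono hspan.ge)
  exact ⟨.mk (hv.codRestrict K hvK) (dense_iff_topologicalClosure_eq_top.mp hdense).ge,
    fun i => by rw [HilbertBasis.coe_mk]; rfl⟩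

theorem Orthonormal.hasSum_inner_sq_of_mem_topologicalClosure_span (hv : Orthonormal ℝ v)
    {x : E} (hx : x ∈ (Submodule.span ℝ (Set.range v)).topologicalClosure) :
    HasSum (fun i => ⟪x, v i⟫ ^ 2) (‖x‖ ^ 2) := by
  obtain ⟨b, hb⟩ := hv.exists_hilbertBasis_topologicalClosure_span
  have := b.hasSum_inner_mul_inner ⟨x, hx⟩ ⟨x, hx⟩
  simp only [Submodule.coe_inner, hb, real_inner_self_eq_norm_sq] at this
  simpa only [real_inner_comm x, sq] using this

theorem Orthonormal.norm_le_mul_norm_of_abs_inner_le {w : ι → F} (hv : Orthonormal ℝ v)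
    (hw : Orthonormal ℝ w) {x : E} (hx : x ∈ (Submodule.span ℝ (Set.range v)).topologicalClosure)
    {y : F} {M : ℝ} (hM : 0 ≤ M) (h : ∀ i, |⟪x, v i⟫| ≤ M * |⟪y, w i⟫|) :
    ‖x‖ ≤ M * ‖y‖ := by
  have hy : HasSum (fun i => ⟪y, w i⟫ ^ 2) (∑' i, ⟪y, w i⟫ ^ 2) := by
    simpa only [real_inner_comm y, Real.norm_eq_abs, sq_abs]
      using (hw.inner_products_summable y).hasSum
  have hsq : ‖x‖ ^ 2 ≤ (M * ‖y‖) ^ 2 := calc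
    ‖x‖ ^ 2 ≤ M ^ 2 * ∑' i, ⟪y, w i⟫ ^ 2 :=
      hasSum_le (fun i => (sq_le_sq.mpr (by rw [abs_mul, abs_of_nonneg hM]; exact h i)).trans_eq
        (mul_pow ..)) (hv.hasSum_inner_sq_of_mem_topologicalClosure_span hx) (hy.mul_left _)
    _ ≤ M ^ 2 * ‖y‖ ^ 2 := by
      gcongr
      simpa only [real_inner_comm y, Real.norm_eq_abs, sq_abs] using hw.tsum_inner_products_le y
    _ = (M * ‖y‖) ^ 2 := (mul_pow ..).symm
  exact (sq_le_sq₀ (norm_nonneg x) (by positivity)).mp hsq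

end Parseval

theorem ae_norm_le_of_ae_ae_inner_le {E : Type*} [NormedAddCommGroup E] [InnerProductSpace ℝ E]
    [HereditarilyLindelofSpace E] [MeasurableSpace E] {ρ : Measure E} {κ : ℝ} (hκ : 0 ≤ κ)
    (h : ∀ᵐ x ∂ρ, ∀ᵐ x' ∂ρ, ⟪x, x'⟫ ≤ κ ^ 2) : ∀ᵐ x ∂ρ, ‖x‖ ≤ κ := by
  filter_upwards [h, ρ.support_mem_ae] with x hx hxρ
  have hxx : ⟪x, x⟫ ≤ κ ^ 2 := ρ.support_subset_of_isClosed
    (isClosed_le (continuous_const.inner continuous_id) continuous_const) hx hxρ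
  rwa [real_inner_self_eq_norm_sq, sq_le_sq₀ (norm_nonneg x) hκ] at hxx

theorem MeasureTheory.Lp.norm_le_mul_norm_of_ae_eq_inner {E : Type*} [NormedAddCommGroup E]
    [InnerProductSpace ℝ E] [MeasurableSpace E] {p : ENNReal} {ρ : Measure E}
    [IsProbabilityMeasure ρ] {κ : ℝ} (hκ : 0 ≤ κ) (hρ : ∀ᵐ x ∂ρ, ‖x‖ ≤ κ) {u : Lp ℝ p ρ} {v : E}
    (hu : u =ᵐ[ρ] fun x => ⟪v, x⟫) : ‖u‖ ≤ κ * ‖v‖ := by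
  have hbound : ∀ᵐ x ∂ρ, ‖u x‖ ≤ κ * ‖v‖ := by
    filter_upwards [hu, hρ] with x hux hx
    rw [hux, Real.norm_eq_abs, mul_comm]
    exact (abs_real_inner_le_norm v x).trans (by gcongr)
  simpa [measureUnivNNReal] using Lp.norm_le_of_ae_bound (mul_nonneg hκ (norm_nonneg v)) hbound

theorem ContinuousLinearMap.abs_le_opNorm_of_apply_eq_smul {E F : Type*}
    [SeminormedAddCommGroup E] [NormedSpace ℝ E] [SeminormedAddCommGroup F] [NormedSpace ℝ F]
    (A : E →L[ℝ] F) {x : E} {y : F} {s : ℝ} (hx : ‖x‖ = 1) (hy : ‖y‖ = 1) (h : A x = s • y) :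
    |s| ≤ ‖A‖ := by
  simpa [h, norm_smul, hx, hy] using A.le_opNorm x

section SingularSystem

variable {E F ι : Type*} [NormedAddCommGroup E] [InnerProductSpace ℝ E] [CompleteSpace E]
  [NormedAddCommGroup F] [InnerProductSpace ℝ F] [CompleteSpace F]
  {A : E →L[ℝ] F} {e : HilbertBasis ι ℝ E} {f : ι → F} {s : ι → ℝ}

theorem ContinuousLinearMap.adjoint_apply_eq_smul_of_apply_eq_smul (hf : Orthonormal ℝ f)
    (hA : ∀ i, A (e i) = s i • f i) (j : ι) : A.adjoint (f j) = s j • e j := by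
  refine e.repr.injective (lp.ext (funext fun i => ?_))
  simp only [e.repr_apply_apply, adjoint_inner_right, hA, real_inner_smul_left,
    real_inner_smul_right]
  rcases eq_or_ne i j with rfl | hij
  · simp [hf.1 i, e.orthonormal.1 i]
  · simp [hf.2 hij, e.orthonormal.2 hij]

theorem ContinuousLinearMap.inner_apply_eq_mul_inner_of_apply_eq_smul (hf : Orthonormal ℝ f)
    (hA : ∀ i, A (e i) = s i • f i) (x : E) (i : ι) : ⟪A x, f i⟫ = s i * ⟪x, e i⟫ := by
  rw [← adjoint_inner_right, A.adjoint_apply_eq_smul_of_apply_eq_smul hf hA, real_inner_smul_right]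

end SingularSystem

theorem Real.inv_mul_sqrt_mul_rpow_mul {u : ℝ} (hu : 0 < u) (ζ c : ℝ) :
    u⁻¹ * (√u * (u ^ ζ * c)) = u ^ (ζ - 1 / 2) * c := by
  rw [Real.sqrt_eq_rpow, ← Real.rpow_neg_one, ← mul_assoc, ← mul_assoc, ← Real.rpow_add hu,
    ← Real.rpow_add hu]
  ring_nf

theorem abs_rpow_neg_mul_cutoff_residual_le {u lam a ζ c : ℝ} (hu : 0 ≤ u) (hlam : 0 < lam)
    (ha : a ≤ ζ) :
    |u ^ (-a) * (√u * (if lam ≤ u then u ^ (ζ - 1 / 2) * c else 0) - u ^ ζ * c)|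
      ≤ lam ^ (ζ - a) * |c| := by
  split_ifs with h
  · rw [Real.sqrt_eq_rpow, ← mul_assoc, ← Real.rpow_add (hlam.trans_le h), add_sub_cancel,
      sub_self, mul_zero, abs_zero]
    positivity
  · rw [mul_zero, zero_sub, mul_neg, abs_neg, ← mul_assoc, abs_mul,
      abs_of_nonneg (by positivity)]
    gcongr
    -- `Real.rpow_add` would need `0 < u`
    calc u ^ (-a) * u ^ ζ ≤ u ^ (-a + ζ) := Real.le_rpow_add hu _ _
      _ ≤ lam ^ (ζ - a) := by
        rw [neg_add_eq_sub]
        exact Real.rpow_le_rpow hu (not_le.mp h).le (sub_nonneg.mpr ha)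

theorem abs_rpow_mul_cutoff_le {u lam a ζ c M : ℝ} (hlam : 0 < lam) (hM : 0 ≤ M)
    (h : lam ≤ u → u ^ (ζ + a - 1) ≤ M) :
    |u ^ (a - 1 / 2) * (if lam ≤ u then u ^ (ζ - 1 / 2) * c else 0)| ≤ M * |c| := by
  split_ifs with hu
  · rw [← mul_assoc, ← Real.rpow_add (hlam.trans_le hu), abs_mul,
      abs_of_nonneg (Real.rpow_nonneg (hlam.le.trans hu) _),
      show a - 1 / 2 + (ζ - 1 / 2) = ζ + a - 1 by ring]
    exact mul_le_mul_of_nonneg_right (h hu) (abs_nonneg c)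
  · rw [mul_zero, abs_zero]
    positivity

theorem spectral_cutoff_vector_properties_general
    {H : Type*} [NormedAddCommGroup H] [InnerProductSpace ℝ H] [CompleteSpace H]
    [SecondCountableTopology H] [MeasurableSpace H]
    -- the marginal distribution
    (ρX : Measure H) [IsProbabilityMeasure ρX]
    (κ : ℝ) (hκ : 1 ≤ κ)
    (hbound : ∀ᵐ x ∂ρX, ∀ᵐ x' ∂ρX, ⟪x, x'⟫ ≤ κ ^ 2)
    -- `S_ρ` and the covariance operator `T`
    (Sρ : H →L[ℝ] Lp ℝ 2 ρX)
    (hSρ : ∀ v : H, (Sρ v : H → ℝ) =ᵐ[ρX] (fun x => ⟪v, x⟫))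
    -- a singular value decomposition of `S_ρ`
    {ι : Type*} (e : HilbertBasis ι ℝ H) (μ : ι → ℝ) (hμ : ∀ i, 0 ≤ μ i)
    (f : ι → Lp ℝ 2 ρX) (hf : Orthonormal ℝ f)
    (hSVD : ∀ i, Sρ (e i) = Real.sqrt (μ i) • f i)
    -- the source condition `f_H = ℒ^ζ g₀`, `‖g₀‖_ρ ≤ R`
    (ζ R : ℝ)
    (fH g₀ : Lp ℝ 2 ρX) (hg₀ : ‖g₀‖ ≤ R)
    (hsource : ∀ i, ⟪fH, f i⟫ = μ i ^ ζ * ⟪g₀, f i⟫)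
    -- `ω_⋆^λ = G_λ(T) S_ρ* f_H`
    (lam : ℝ) (hlam : 0 < lam)
    (ωstar : H)
    (hωstar : ∀ i, ⟪ωstar, e i⟫ =
      if lam ≤ μ i then (μ i)⁻¹ * ⟪(ContinuousLinearMap.adjoint Sρ) fH, e i⟫ else 0) :
    -- (1) for any `a ≤ ζ`, `‖ℒ^{−a}(S_ρ ω_⋆^λ − f_H)‖_ρ ≤ R λ^{ζ−a}`
    (∀ a : ℝ, a ≤ ζ →
      ∀ g : Lp ℝ 2 ρX, g ∈ (Submodule.span ℝ (Set.range f)).topologicalClosure →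
        (∀ i, ⟪g, f i⟫ = μ i ^ (-a) * ⟪Sρ ωstar - fH, f i⟫) →
        ‖g‖ ≤ R * lam ^ (ζ - a)) ∧
    -- (2) the bounds on `‖T^{a−1/2} ω_⋆^λ‖_H`
    (∀ a : ℝ, ∀ v : H, (∀ i, ⟪v, e i⟫ = μ i ^ (a - 1 / 2) * ⟪ωstar, e i⟫) →
      ((-ζ ≤ a → a ≤ 1 - ζ → ‖v‖ ≤ R * lam ^ (ζ + a - 1)) ∧
        (1 - ζ ≤ a → ‖v‖ ≤ R * κ ^ (2 * (ζ + a - 1))))) := by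
  have hκ0 : 0 ≤ κ := zero_le_one.trans hκ
  have hSρκ : ‖Sρ‖ ≤ κ := Sρ.opNorm_le_bound hκ0 fun v =>
    Lp.norm_le_mul_norm_of_ae_eq_inner hκ0 (ae_norm_le_of_ae_ae_inner_le hκ0 hbound) (hSρ v)
  have hμκ (i : ι) : μ i ≤ κ ^ 2 := by
    have := (Sρ.abs_le_opNorm_of_apply_eq_smul (e.orthonormal.1 i) (hf.1 i) (hSVD i)).trans hSρκ
    rw [abs_of_nonneg (Real.sqrt_nonneg _)] at this
    exact (Real.sqrt_le_iff.mp this).2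
  have hω (i : ι) :
      ⟪ωstar, e i⟫ = if lam ≤ μ i then μ i ^ (ζ - 1 / 2) * ⟪g₀, f i⟫ else 0 := by
    rw [hωstar, ContinuousLinearMap.adjoint_inner_left, hSVD, real_inner_smul_right, hsource]
    exact if_ctx_congr Iff.rfl (fun h => Real.inv_mul_sqrt_mul_rpow_mul (hlam.trans_le h) _ _)
      fun _ => rfl
  have hRg₀ {M : ℝ} (hM : 0 ≤ M) : M * ‖g₀‖ ≤ R * M :=
    (mul_le_mul_of_nonneg_left hg₀ hM).trans_eq (mul_comm _ _)
  refine ⟨fun a ha g hg hgc => ?_, fun a v hv => ?_⟩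
  · refine (hf.norm_le_mul_norm_of_abs_inner_le hf hg (by positivity) fun i => ?_).trans
      (hRg₀ (by positivity))
    rw [hgc, inner_sub_left, Sρ.inner_apply_eq_mul_inner_of_apply_eq_smul hf hSVD, hω, hsource]
    exact abs_rpow_neg_mul_cutoff_residual_le (hμ i) hlam ha
  have hv_le {M : ℝ} (hM : 0 ≤ M) (h : ∀ i, lam ≤ μ i → μ i ^ (ζ + a - 1) ≤ M) :
      ‖v‖ ≤ R * M := by
    refine (e.orthonormal.norm_le_mul_norm_of_abs_inner_le hf ?_ hM fun i => ?_).trans (hRg₀ hM)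
    · rw [e.dense_span]; exact Submodule.mem_top
    · rw [hv, hω]
      exact abs_rpow_mul_cutoff_le hlam hM (h i)
  refine ⟨fun _ hle => hv_le (by positivity) fun i h => ?_, fun hge => hv_le (by positivity)
    fun i _ => ?_⟩
  · exact Real.rpow_le_rpow_of_nonpos hlam h (by linarith)
  · rw [Real.rpow_mul hκ0, Real.rpow_two]
    exact Real.rpow_le_rpow (hμ i) (hμκ i) (by linarith)

theorem spectral_cutoff_vector_properties
    {H : Type*} [NormedAddCommGroup H] [InnerProductSpace ℝ H] [CompleteSpace H]
    [SecondCountableTopology H] [MeasurableSpace H] [BorelSpace H]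
    -- the marginal distribution
    (ρX : Measure H) [IsProbabilityMeasure ρX]
    (hsupp : ∃ K : Set H, IsCompact K ∧ ρX Kᶜ = 0)
    (κ : ℝ) (hκ : 1 ≤ κ)
    (hbound : ∀ᵐ x ∂ρX, ∀ᵐ x' ∂ρX, ⟪x, x'⟫ ≤ κ ^ 2)
    -- `S_ρ` and the covariance operator `T`
    (Sρ : H →L[ℝ] Lp ℝ 2 ρX)
    (hSρ : ∀ v : H, (Sρ v : H → ℝ) =ᵐ[ρX] (fun x => ⟪v, x⟫))
    (T : H →L[ℝ] H) (hT : T = (ContinuousLinearMap.adjoint Sρ).comp Sρ)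
    -- a singular value decomposition of `S_ρ`
    {ι : Type*} (e : HilbertBasis ι ℝ H) (μ : ι → ℝ) (hμ : ∀ i, 0 ≤ μ i)
    (hTe : ∀ i, T (e i) = μ i • e i)
    (f : ι → Lp ℝ 2 ρX) (hf : Orthonormal ℝ f)
    (hSVD : ∀ i, Sρ (e i) = Real.sqrt (μ i) • f i)
    -- the source condition `f_H = ℒ^ζ g₀`, `‖g₀‖_ρ ≤ R`
    (ζ R : ℝ) (hζ : 0 ≤ ζ) (hR : 0 < R)
    (fH g₀ : Lp ℝ 2 ρX) (hg₀ : ‖g₀‖ ≤ R)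
    (hfHmem : fH ∈ (Submodule.span ℝ (Set.range f)).topologicalClosure)
    (hsource : ∀ i, ⟪fH, f i⟫ = μ i ^ ζ * ⟪g₀, f i⟫)
    -- `ω_⋆^λ = G_λ(T) S_ρ* f_H`
    (lam : ℝ) (hlam : 0 < lam)
    (ωstar : H)
    (hωstar : ∀ i, ⟪ωstar, e i⟫ =
      if lam ≤ μ i then (μ i)⁻¹ * ⟪(ContinuousLinearMap.adjoint Sρ) fH, e i⟫ else 0) :
    -- (1) for any `a ≤ ζ`, `‖ℒ^{−a}(S_ρ ω_⋆^λ − f_H)‖_ρ ≤ R λ^{ζ−a}`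
    (∀ a : ℝ, a ≤ ζ →
      ∀ g : Lp ℝ 2 ρX, g ∈ (Submodule.span ℝ (Set.range f)).topologicalClosure →
        (∀ i, ⟪g, f i⟫ = μ i ^ (-a) * ⟪Sρ ωstar - fH, f i⟫) →
        ‖g‖ ≤ R * lam ^ (ζ - a)) ∧
    -- (2) the bounds on `‖T^{a−1/2} ω_⋆^λ‖_H`
    (∀ a : ℝ, ∀ v : H, (∀ i, ⟪v, e i⟫ = μ i ^ (a - 1 / 2) * ⟪ωstar, e i⟫) →
      ((-ζ ≤ a → a ≤ 1 - ζ → ‖v‖ ≤ R * lam ^ (ζ + a - 1)) ∧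
        (1 - ζ ≤ a → ‖v‖ ≤ R * κ ^ (2 * (ζ + a - 1))))) :=
  spectral_cutoff_vector_properties_general ρX κ hκ hbound Sρ hSρ e μ hμ f hf hSVD ζ R fH g₀ hg₀
    hsource lam hlam ωstar hωstar
end
end

section
/- Assume the source condition f_H = ℒ^ζ g₀ with ‖g₀‖_ρ ≤ R (ζ ≥ 0, R > 0). With λ > 0, ω_⋆^λ = G_λ(T) S_ρ* f_H (G_λ(u) = 1/u for u ≥ λ, 0 otherwise), P a projection onto a closed subspace of H, and the quantities Δ₁, Δ₂, Δ₄, Δ₅ as defined in the context, one has: ‖(T_x+λI)^{−1/2}(S_x* ȳ − T_x P ω_⋆^λ)‖_H ≤ Δ₁^{1/2} Δ₂ + Δ₁^{1/2} R (Δ₅+λ) λ^{ζ−1} if ζ ≤ 1, and ‖(T_x+λI)^{−1/2}(S_x* ȳ − T_x P ω_⋆^λ)‖_H ≤ Δ₁^{1/2} Δ₂ + Δ₁^{1/2} R (κΔ₄ + Δ₅) κ^{2(ζ−1)} if ζ > 1. -/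
/-!
Write `S_x* ȳ − T_x P ω = (S_x* ȳ − T_x ω) + T_x (I − P) ω`. Replacing `(T_x + λ)^{-1/2}` by
`(T + λ)^{-1/2}` costs a factor `Δ₁^{1/2}` and turns the first part into `Δ₂`.

For the second part, read the source condition in the eigenbasis `(eᵢ, μᵢ)` of `T`:
`ℒ^ζ S_ρ eᵢ = μᵢ^ζ S_ρ eᵢ` and the vectors `μᵢ^{-1/2} S_ρ eᵢ` are orthonormal, so by Bessel's
inequality `ω = T^{1/2} h` with `‖h‖ ≤ R · sup_{μᵢ ≥ λ} μᵢ^{ζ-1}`. That supremum is at most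
`λ^{ζ-1}` when `ζ ≤ 1`, and at most `κ^{2(ζ-1)}` when `ζ > 1` because `‖T‖ ≤ κ²` (which follows
from `‖x‖ ≤ κ` on the support of `ρ_X`). Since `‖T^{1/2}(I − P)‖² = Δ₅`, the vectors
`(I − P) T^{1/2} h` and `T^{1/2} (I − P) T^{1/2} h` are small. For `ζ ≤ 1`, pass through
`(T_x + λ)^{1/2}` and `(T + λ)^{1/2}` and use `‖(T + λ)^{1/2} u‖² = ‖T^{1/2} u‖² + λ ‖u‖²`. For
`ζ > 1`, write `T_x = T − (T − T_x)`; the second term is measured by `Δ₄`.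
-/

open MeasureTheory RealInnerProductSpace Polynomial

noncomputable section

/-- `p` encodes the real powers `s ↦ O ^ s` (for `s ≥ 0`) of the nonnegative
self-adjoint operator `O`, as given by the continuous functional calculus. -/
def IsPowers {E : Type*} [NormedAddCommGroup E] [InnerProductSpace ℝ E] [CompleteSpace E]
    (O : E →L[ℝ] E) (p : ℝ → E →L[ℝ] E) : Prop :=
  p 0 = 1 ∧ p 1 = O ∧ (∀ s t : ℝ, 0 ≤ s → 0 ≤ t → p (s + t) = (p s).comp (p t)) ∧
    (∀ s : ℝ, 0 ≤ s → (p s).IsPositive) ∧ ContinuousOn p (Set.Ioi (0 : ℝ))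

open ContinuousLinearMap (adjoint adjoint_inner_left adjoint_inner_right)

theorem inv_sqrt_add_mul_le_sqrt {μ lam : ℝ} (hμ : 0 ≤ μ) (hlam : 0 ≤ lam) :
    (√(μ + lam))⁻¹ * μ ≤ √μ := by
  rcases hμ.eq_or_lt with rfl | hμ
  · simp
  calc (√(μ + lam))⁻¹ * μ ≤ (√μ)⁻¹ * μ := by gcongr; linarith
    _ = √μ := by rw [inv_mul_eq_div, Real.div_sqrt]

namespace HilbertBasis

variable {ι E : Type*} [NormedAddCommGroup E] [InnerProductSpace ℝ E] (b : HilbertBasis ι ℝ E)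

theorem ext_inner {x y : E} (h : ∀ i, ⟪b i, x⟫ = ⟪b i, y⟫) : x = y :=
  b.repr.injective <| lp.ext <| funext fun i => by simp only [b.repr_apply_apply, h]

theorem hasSum_inner_sq (v : E) : HasSum (fun i => ⟪b i, v⟫ ^ 2) (‖v‖ ^ 2) := by
  simpa [← real_inner_self_eq_norm_sq, real_inner_comm _ v, sq] using
    b.hasSum_inner_mul_inner v v

theorem exists_inner_eq {a : ι → ℝ} (ha : Summable fun i => a i ^ 2) :
    ∃ h : E, ∀ i, ⟪b i, h⟫ = a i := by
  have hmem : Memℓp a 2 := memℓp_gen <| by simpa using ha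
  exact ⟨b.repr.symm ⟨a, hmem⟩, fun i => by
    rw [← b.repr_apply_apply, LinearIsometryEquiv.apply_symm_apply]⟩

theorem exists_inner_eq_indicator_mul_and_norm_le {s : Set ι} {w c : ι → ℝ}
    (hc : Summable fun i : s => c i ^ 2) {B D : ℝ} (hcB : ∑' i : s, c i ^ 2 ≤ B ^ 2)
    (hB : 0 ≤ B) (hD : 0 ≤ D) (hw : ∀ i ∈ s, |w i| ≤ D) :
    ∃ h : E, (∀ i, ⟪b i, h⟫ = s.indicator (fun i => w i * c i) i) ∧ ‖h‖ ≤ D * B := by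
  set a : ι → ℝ := s.indicator fun i => w i * c i with ha_def
  have ha_le : ∀ i : s, a i ^ 2 ≤ D ^ 2 * c i ^ 2 := fun i => by
    rw [ha_def, Set.indicator_of_mem i.2, mul_pow]
    exact mul_le_mul_of_nonneg_right (sq_le_sq' (neg_le_of_abs_le (hw i i.2))
      (le_of_abs_le (hw i i.2))) (sq_nonneg _)
  have ha_summ : Summable fun i : s => a i ^ 2 :=
    .of_nonneg_of_le (fun _ => sq_nonneg _) ha_le (hc.mul_left _)
  have hsupp : Function.support (fun i => a i ^ 2) ⊆ s := fun i hi => by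
    by_contra his
    exact hi (by simp [a, Set.indicator_of_notMem his])
  have ha := (hasSum_subtype_iff_of_support_subset hsupp).mp ha_summ.hasSum
  obtain ⟨h, hh⟩ := b.exists_inner_eq ha.summable
  refine ⟨h, hh, (sq_le_sq₀ (norm_nonneg h) (by positivity)).mp ?_⟩
  calc ‖h‖ ^ 2 = ∑' i : s, a i ^ 2 := (b.hasSum_inner_sq h).unique (by simpa only [hh] using ha)
    _ ≤ ∑' i : s, D ^ 2 * c i ^ 2 := ha_summ.tsum_le_tsum ha_le (hc.mul_left _)
    _ ≤ (D * B) ^ 2 := by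
      rw [tsum_mul_left, mul_pow]
      exact mul_le_mul_of_nonneg_left hcB (sq_nonneg D)

variable [CompleteSpace E] {f g : ι → ℝ} {A B : E →L[ℝ] E}

theorem adjoint_apply_of_apply_eq_smul (hA : ∀ i, A (b i) = f i • b i) (i : ι) :
    adjoint A (b i) = f i • b i := by
  refine b.ext_inner fun j => ?_
  rw [adjoint_inner_right, hA, real_inner_smul_left, real_inner_smul_right]
  rcases eq_or_ne i j with rfl | hij
  · rfl
  · rw [b.orthonormal.inner_eq_zero hij.symm, mul_zero, mul_zero]

theorem inner_apply_of_apply_eq_smul (hA : ∀ i, A (b i) = f i • b i) (v : E) (i : ι) :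
    ⟪b i, A v⟫ = f i * ⟪b i, v⟫ := by
  rw [← adjoint_inner_left, b.adjoint_apply_of_apply_eq_smul hA,
    real_inner_smul_left]

theorem isSelfAdjoint_of_apply_eq_smul (hA : ∀ i, A (b i) = f i • b i) : IsSelfAdjoint A := by
  refine ContinuousLinearMap.isSelfAdjoint_iff'.mpr <| ContinuousLinearMap.ext fun v =>
    b.ext_inner fun i => ?_
  rw [adjoint_inner_right, hA, real_inner_smul_left, b.inner_apply_of_apply_eq_smul hA]

theorem hasSum_sq_of_apply_eq_smul (hA : ∀ i, A (b i) = f i • b i) (v : E) :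
    HasSum (fun i => (f i * ⟪b i, v⟫) ^ 2) (‖A v‖ ^ 2) := by
  simpa only [b.inner_apply_of_apply_eq_smul hA] using b.hasSum_inner_sq (A v)

theorem apply_apply_eq_self_of_mul_eq_one (hA : ∀ i, A (b i) = f i • b i)
    (hB : ∀ i, B (b i) = g i • b i) (hfg : ∀ i, f i * g i = 1) (v : E) : A (B v) = v :=
  b.ext_inner fun i => by
    rw [b.inner_apply_of_apply_eq_smul hA, b.inner_apply_of_apply_eq_smul hB, ← mul_assoc,
      hfg, one_mul]

theorem norm_apply_le_of_abs_le (hA : ∀ i, A (b i) = f i • b i)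
    (hB : ∀ i, B (b i) = g i • b i) (hfg : ∀ i, |f i| ≤ |g i|) (v : E) : ‖A v‖ ≤ ‖B v‖ := by
  refine (sq_le_sq₀ (norm_nonneg _) (norm_nonneg _)).mp <|
    hasSum_le (fun i => ?_) (b.hasSum_sq_of_apply_eq_smul hA v) (b.hasSum_sq_of_apply_eq_smul hB v)
  rw [sq_le_sq, abs_mul, abs_mul]
  exact mul_le_mul_of_nonneg_right (hfg i) (abs_nonneg _)

theorem norm_apply_le_of_abs_le_const (hA : ∀ i, A (b i) = f i • b i) {C : ℝ} (hC : 0 ≤ C)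
    (hfC : ∀ i, |f i| ≤ C) (v : E) : ‖A v‖ ≤ C * ‖v‖ := by
  have hC1 : ∀ i, (C • (1 : E →L[ℝ] E)) (b i) = C • b i := fun i => rfl
  simpa [norm_smul, abs_of_nonneg hC] using
    b.norm_apply_le_of_abs_le hA hC1 (fun i => (hfC i).trans (le_abs_self C)) v

theorem norm_sq_apply_eq_add (hA : ∀ i, A (b i) = f i • b i) (hB : ∀ i, B (b i) = g i • b i) {c : ℝ}
    (hfg : ∀ i, f i ^ 2 = g i ^ 2 + c) (v : E) : ‖A v‖ ^ 2 = ‖B v‖ ^ 2 + c * ‖v‖ ^ 2 := by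
  refine (b.hasSum_sq_of_apply_eq_smul hA v).unique ?_
  convert (b.hasSum_sq_of_apply_eq_smul hB v).add ((b.hasSum_inner_sq v).mul_left c) using 2
  rw [mul_pow, mul_pow, hfg]
  ring

theorem norm_apply_apply_le_of_sqrt_le {μ : ι → ℝ}
    (hμ : ∀ i, 0 ≤ μ i) {lam : ℝ} (hlam : 0 ≤ lam) {R : E →L[ℝ] E}
    (hA : ∀ i, A (b i) = μ i • b i) (hR : ∀ i, R (b i) = (√(μ i + lam))⁻¹ • b i)
    (hB : ∀ i, B (b i) = g i • b i) (hg : ∀ i, √(μ i) ≤ g i) (v : E) : ‖R (A v)‖ ≤ ‖B v‖ := by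
  have hRA : ∀ i, (R ∘L A) (b i) = ((√(μ i + lam))⁻¹ * μ i) • b i := fun i => by
    rw [ContinuousLinearMap.comp_apply, hA, map_smul, hR, smul_smul, mul_comm]
  refine b.norm_apply_le_of_abs_le hRA hB (fun i => ?_) v
  rw [abs_of_nonneg (by have := hμ i; positivity)]
  exact (inv_sqrt_add_mul_le_sqrt (hμ i) hlam).trans ((hg i).trans (le_abs_self _))

end HilbertBasis

theorem ContinuousLinearMap.IsPositive.apply_eq_sqrt_smul_of_apply_apply
    {E : Type*} [NormedAddCommGroup E] [InnerProductSpace ℝ E] {A : E →L[ℝ] E}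
    (hA : A.IsPositive) {ν : ℝ} (hν : 0 < ν) {v : E} (h : A (A v) = ν • v) :
    A v = √ν • v := by
  -- `u` is an eigenvector of the positive operator `A` for the eigenvalue `-√ν < 0`
  set u := A v - √ν • v
  have hAu : A u = -√ν • u := by
    simp only [u, map_sub, map_smul, h, smul_sub, smul_smul, neg_smul, neg_mul,
      Real.mul_self_sqrt hν.le]
    abel
  have hnn := hA.inner_nonneg_left u
  rw [hAu, real_inner_smul_left, real_inner_self_eq_norm_sq] at hnn
  have hu : ‖u‖ ^ 2 = 0 := by
    nlinarith [Real.sqrt_pos.mpr hν, sq_nonneg ‖u‖]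
  simpa [u, sub_eq_zero] using hu

namespace IsPowers

variable {E : Type*} [NormedAddCommGroup E] [InnerProductSpace ℝ E] [CompleteSpace E]
  {O : E →L[ℝ] E} {p : ℝ → E →L[ℝ] E} {μ : ℝ} {v : E}

theorem apply_inv_two_pow_of_apply_eq_smul (hp : IsPowers O p) (hμ : 0 < μ)
    (hv : O v = μ • v) (n : ℕ) : p ((2 ^ n)⁻¹) v = μ ^ ((2 ^ n : ℝ)⁻¹) • v := by
  obtain ⟨-, hp1, hadd, hpos, -⟩ := hp
  induction n with
  | zero => simpa [hp1] using hv
  | succ n ih =>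
    have hn : (0 : ℝ) ≤ (2 ^ (n + 1))⁻¹ := by positivity
    have hsq : p ((2 ^ (n + 1))⁻¹) (p ((2 ^ (n + 1))⁻¹) v) = μ ^ ((2 ^ n : ℝ)⁻¹) • v := by
      rw [← ContinuousLinearMap.comp_apply, ← hadd _ _ hn hn, ← ih]
      congr 3
      ring
    rw [(hpos _ hn).apply_eq_sqrt_smul_of_apply_apply (by positivity) hsq,
      Real.sqrt_eq_rpow, ← Real.rpow_mul hμ.le]
    congr 2
    ring

theorem apply_natCast_div_two_pow_of_apply_eq_smul (hp : IsPowers O p) (hμ : 0 < μ)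
    (hv : O v = μ • v) (m n : ℕ) : p (m / 2 ^ n) v = μ ^ ((m : ℝ) / 2 ^ n) • v := by
  induction m with
  | zero => simp [hp.1]
  | succ m ih =>
    have hsplit : ((m + 1 : ℕ) : ℝ) / 2 ^ n = (2 ^ n)⁻¹ + m / 2 ^ n := by push_cast; ring
    rw [hsplit, hp.2.2.1 _ _ (by positivity) (by positivity), ContinuousLinearMap.comp_apply,
      ih, map_smul, hp.apply_inv_two_pow_of_apply_eq_smul hμ hv, smul_smul,
      ← Real.rpow_add hμ, add_comm]

theorem apply_of_apply_eq_smul (hp : IsPowers O p) (hμ : 0 < μ) (hv : O v = μ • v) {s : ℝ}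
    (hs : 0 ≤ s) : p s v = μ ^ s • v := by
  rcases hs.eq_or_lt with rfl | hs
  · simp [hp.1]
  have hlim : Filter.Tendsto (fun n : ℕ => (⌊s * 2 ^ n⌋₊ : ℝ) / 2 ^ n) Filter.atTop (nhds s) :=
    (tendsto_nat_floor_mul_div_atTop hs.le).comp
      (tendsto_pow_atTop_atTop_of_one_lt one_lt_two)
  have hp_lim := (((ContinuousLinearMap.apply ℝ E v).continuous.tendsto _).comp
    ((hp.2.2.2.2.continuousAt (isOpen_Ioi.mem_nhds hs)).tendsto.comp hlim))
  have hμ_lim := (((Real.continuousAt_const_rpow hμ.ne').tendsto.comp hlim).smul_const v)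
  refine tendsto_nhds_unique ?_ hμ_lim
  simpa [Function.comp_def, hp.apply_natCast_div_two_pow_of_apply_eq_smul hμ hv] using hp_lim

end IsPowers

section SourceCondition

variable {ι H G : Type*} [NormedAddCommGroup H] [InnerProductSpace ℝ H] [CompleteSpace H]
  [NormedAddCommGroup G] [InnerProductSpace ℝ G] [CompleteSpace G]
  {S : H →L[ℝ] G} {b : HilbertBasis ι ℝ H} {μ : ι → ℝ}

theorem inner_apply_apply_of_adjoint_comp_apply_eq_smul
    (hb : ∀ i, (adjoint S ∘L S) (b i) = μ i • b i) (i j : ι) :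
    ⟪S (b i), S (b j)⟫ = μ i * ⟪b i, b j⟫ := by
  rw [← adjoint_inner_left, ← ContinuousLinearMap.comp_apply, hb, real_inner_smul_left]

theorem orthonormal_inv_sqrt_smul_apply (hb : ∀ i, (adjoint S ∘L S) (b i) = μ i • b i)
    {s : Set ι} (hs : ∀ i ∈ s, 0 < μ i) :
    Orthonormal ℝ fun i : s => (√(μ i))⁻¹ • S (b i) := by
  classical
  refine orthonormal_iff_ite.mpr fun i j => ?_
  rw [real_inner_smul_left, real_inner_smul_right,
    inner_apply_apply_of_adjoint_comp_apply_eq_smul hb]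
  rcases eq_or_ne i j with rfl | hij
  · have := hs i i.2
    field_simp
    simp [Real.sq_sqrt this.le, b.orthonormal.1 i]
  · rw [if_neg hij, b.orthonormal.inner_eq_zero (Subtype.coe_injective.ne hij)]
    ring

theorem inner_adjoint_powers_apply (hb : ∀ i, (adjoint S ∘L S) (b i) = μ i • b i)
    {Lpow : ℝ → G →L[ℝ] G} (hL : IsPowers (S ∘L adjoint S) Lpow) {ζ : ℝ} (hζ : 0 ≤ ζ)
    (g : G) {i : ι} (hi : 0 < μ i) :
    ⟪adjoint S (Lpow ζ g), b i⟫ = μ i ^ ζ * ⟪g, S (b i)⟫ := by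
  have heig : (S ∘L adjoint S) (S (b i)) = μ i • S (b i) := by
    rw [ContinuousLinearMap.comp_apply, ← ContinuousLinearMap.comp_apply (adjoint S), hb,
      map_smul]
  rw [adjoint_inner_left, ← (hL.2.2.2.1 ζ hζ).isSelfAdjoint.adjoint_eq, adjoint_inner_left,
    hL.apply_of_apply_eq_smul hi heig hζ, real_inner_smul_right]

theorem exists_sqrt_apply_eq_and_norm_le_of_source
    (hb : ∀ i, (adjoint S ∘L S) (b i) = μ i • b i)
    {Lpow : ℝ → G →L[ℝ] G} (hL : IsPowers (S ∘L adjoint S) Lpow) {ζ : ℝ} (hζ : 0 ≤ ζ) (g : G)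
    {lam : ℝ} (hlam : 0 < lam) {ω : H}
    (hω : ∀ i, ⟪ω, b i⟫ = if lam ≤ μ i then (μ i)⁻¹ * ⟪adjoint S (Lpow ζ g), b i⟫ else 0)
    {sT : H →L[ℝ] H} (hsT : ∀ i, sT (b i) = √(μ i) • b i)
    {D : ℝ} (hD0 : 0 ≤ D) (hD : ∀ i, lam ≤ μ i → μ i ^ (ζ - 1) ≤ D) :
    ∃ h : H, sT h = ω ∧ ‖h‖ ≤ D * ‖g‖ := by
  set s : Set ι := {i | lam ≤ μ i}
  have hs : ∀ i ∈ s, 0 < μ i := fun i hi => hlam.trans_le hi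
  set c : ι → ℝ := fun i => (√(μ i))⁻¹ * ⟪g, S (b i)⟫
  have hv := orthonormal_inv_sqrt_smul_apply hb hs
  have hc : ∀ i : s, ‖⟪(√(μ i))⁻¹ • S (b i), g⟫‖ ^ 2 = c i ^ 2 := fun i => by
    rw [real_inner_smul_left, real_inner_comm, Real.norm_eq_abs, sq_abs]
  have hbessel := hv.tsum_inner_products_le g
  have hc_summ := hv.inner_products_summable g
  simp only [hc] at hbessel hc_summ
  obtain ⟨h, hh, hnorm⟩ := b.exists_inner_eq_indicator_mul_and_norm_le hc_summ hbessel
    (norm_nonneg g) hD0 fun i hi => by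
      rw [abs_of_nonneg (Real.rpow_nonneg (hs i hi).le _)]
      exact hD i hi
  refine ⟨h, b.ext_inner fun i => ?_, hnorm⟩
  rw [b.inner_apply_of_apply_eq_smul hsT, hh, real_inner_comm, hω]
  by_cases hi : lam ≤ μ i
  · have hμi := hs i hi
    rw [if_pos hi, Set.indicator_of_mem (show i ∈ s from hi),
      inner_adjoint_powers_apply hb hL hζ g hμi, Real.rpow_sub_one hμi.ne']
    simp only [c]
    field_simp
  · rw [if_neg hi, Set.indicator_of_notMem (show i ∉ s from hi), mul_zero]

theorem eigenvalue_le_sq_of_norm_apply_le {v : H} (hv : ‖v‖ = 1) {μ₀ κ : ℝ}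
    (hSv : (adjoint S ∘L S) v = μ₀ • v) (hS : ‖S v‖ ≤ κ) : μ₀ ≤ κ ^ 2 := by
  have hμ₀ : μ₀ = ‖S v‖ ^ 2 := by
    rw [← real_inner_self_eq_norm_sq, ← adjoint_inner_left, ← ContinuousLinearMap.comp_apply,
      hSv, real_inner_smul_left, real_inner_self_eq_norm_sq, hv, one_pow, mul_one]
  exact hμ₀ ▸ pow_le_pow_left₀ (norm_nonneg _) hS 2

end SourceCondition

theorem MeasureTheory.ae_apply_self_le_of_ae_ae_le {X : Type*} [TopologicalSpace X]
    [HereditarilyLindelofSpace X] [MeasurableSpace X] {μ : Measure X} {f : X → X → ℝ}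
    (hf : ∀ x, Continuous (f x)) {c : ℝ} (h : ∀ᵐ x ∂μ, ∀ᵐ x' ∂μ, f x x' ≤ c) :
    ∀ᵐ x ∂μ, f x x ≤ c := by
  filter_upwards [h, μ.support_mem_ae] with x hx hsupp
  exact μ.support_subset_of_isClosed (isClosed_le (hf x) continuous_const) hx hsupp

theorem norm_apply_le_of_ae_inner_le {H : Type*} [NormedAddCommGroup H] [InnerProductSpace ℝ H]
    [SecondCountableTopology H] [MeasurableSpace H] {ρX : Measure H} [IsProbabilityMeasure ρX]
    {κ : ℝ} {Sρ : H →L[ℝ] Lp ℝ 2 ρX} (hκ : 0 ≤ κ)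
    (hbound : ∀ᵐ x ∂ρX, ∀ᵐ x' ∂ρX, ⟪x, x'⟫ ≤ κ ^ 2)
    (hSρ : ∀ v : H, (Sρ v : H → ℝ) =ᵐ[ρX] (fun x => ⟪v, x⟫)) (v : H) :
    ‖Sρ v‖ ≤ ‖v‖ * κ := by
  have hnorm : ∀ᵐ x ∂ρX, ‖x‖ ≤ κ := by
    filter_upwards [ae_apply_self_le_of_ae_ae_le (fun x => continuous_const.inner continuous_id)
      hbound] with x hx
    rw [real_inner_self_eq_norm_sq] at hx
    exact abs_le_of_sq_le_sq' hx hκ |>.2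
  have hpt : ∀ᵐ x ∂ρX, ‖(Sρ v : H → ℝ) x‖ ≤ ‖v‖ * κ := by
    filter_upwards [hSρ v, hnorm] with x hx hxκ
    rw [hx]
    exact (norm_inner_le_norm v x).trans (by gcongr)
  simpa [measureUnivNNReal] using Lp.norm_le_of_ae_bound (by positivity) hpt

theorem eigenvalue_le_sq_of_ae_inner_le {H : Type*} [NormedAddCommGroup H]
    [InnerProductSpace ℝ H] [CompleteSpace H] [SecondCountableTopology H] [MeasurableSpace H]
    {ρX : Measure H} [IsProbabilityMeasure ρX] {κ : ℝ} {Sρ : H →L[ℝ] Lp ℝ 2 ρX} (hκ : 0 ≤ κ)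
    (hbound : ∀ᵐ x ∂ρX, ∀ᵐ x' ∂ρX, ⟪x, x'⟫ ≤ κ ^ 2)
    (hSρ : ∀ v : H, (Sρ v : H → ℝ) =ᵐ[ρX] (fun x => ⟪v, x⟫)) {v : H} (hv : ‖v‖ = 1) {μ₀ : ℝ}
    (hSv : (adjoint Sρ ∘L Sρ) v = μ₀ • v) : μ₀ ≤ κ ^ 2 :=
  eigenvalue_le_sq_of_norm_apply_le hv hSv <|
    (norm_apply_le_of_ae_inner_le hκ hbound hSρ v).trans_eq (by rw [hv, one_mul])

theorem norm_apply_le_rpow_half_mul_of_apply_apply_eq_self {E : Type*} [SeminormedAddCommGroup E]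
    [NormedSpace ℝ E] {A B C : E →L[ℝ] E}
    (hBC : ∀ w, B (C w) = w) {Δ : ℝ} (hΔ : ‖A ∘L B‖ ^ 2 ≤ Δ) (w : E) :
    ‖A w‖ ≤ Δ ^ (1 / 2 : ℝ) * ‖C w‖ := calc
  ‖A w‖ = ‖(A ∘L B) (C w)‖ := by rw [ContinuousLinearMap.comp_apply, hBC]
  _ ≤ ‖A ∘L B‖ * ‖C w‖ := (A ∘L B).le_opNorm _
  _ ≤ Δ ^ (1 / 2 : ℝ) * ‖C w‖ := by
    gcongr
    rw [← Real.sqrt_eq_rpow]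
    exact Real.le_sqrt_of_sq_le hΔ

theorem norm_apply_sub_apply_le_add {E : Type*} [SeminormedAddCommGroup E] [NormedSpace ℝ E]
    {R R' X P : E →L[ℝ] E} {c : ℝ}
    (hR : ∀ w, ‖R w‖ ≤ c * ‖R' w‖) (y ω : E) :
    ‖R (y - X (P ω))‖ ≤ c * ‖R' (X ω - y)‖ + ‖R (X ((1 - P) ω))‖ := by
  have hdecomp : y - X (P ω) = -(X ω - y) + X ((1 - P) ω) := by
    simp only [sub_apply, one_apply_eq_self, map_sub]
    abel
  rw [hdecomp, map_add, map_neg]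
  refine (norm_add_le _ _).trans (add_le_add_left ?_ _)
  rw [norm_neg]
  exact hR _

section Regularization

variable {H : Type*} [NormedAddCommGroup H] [InnerProductSpace ℝ H] [CompleteSpace H]

namespace IsStarProjection

variable {Q A : H →L[ℝ] H}

theorem norm_apply_apply_le (hQ : IsStarProjection Q) (hA : IsSelfAdjoint A) (h : H) :
    ‖Q (A h)‖ ≤ ‖A ∘L Q‖ * ‖h‖ := by
  have hstar : star (Q * A) = A * Q := by
    rw [star_mul, hA.star_eq, hQ.isSelfAdjoint.star_eq]
  calc ‖Q (A h)‖ ≤ ‖Q * A‖ * ‖h‖ := (Q * A).le_opNorm h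
    _ = ‖A ∘L Q‖ * ‖h‖ := by rw [← norm_star, hstar]; rfl

theorem norm_apply_apply_apply_le (hQ : IsStarProjection Q) (hA : IsSelfAdjoint A) (h : H) :
    ‖A (Q (A h))‖ ≤ ‖A ∘L Q‖ ^ 2 * ‖h‖ := calc
  ‖A (Q (A h))‖ = ‖(A ∘L Q) (Q (A h))‖ := by
    rw [ContinuousLinearMap.comp_apply]
    exact congrArg (‖A ·‖) (DFunLike.congr_fun hQ.isIdempotentElem.eq (A h)).symm
  _ ≤ ‖A ∘L Q‖ * (‖A ∘L Q‖ * ‖h‖) :=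
    ((A ∘L Q).le_opNorm _).trans (by gcongr; exact hQ.norm_apply_apply_le hA h)
  _ = ‖A ∘L Q‖ ^ 2 * ‖h‖ := by ring

end IsStarProjection

theorem norm_apply_proj_apply_le_of_norm_sq_eq {Q sT sTlam sTxlam rTxlam Tx : H →L[ℝ] H}
    (hQ : IsStarProjection Q) (hsT : IsSelfAdjoint sT) {lam c : ℝ} (hlam : 0 ≤ lam) (hc : 0 ≤ c)
    (hrTx : ∀ u, ‖rTxlam (Tx u)‖ ≤ ‖sTxlam u‖) (hsTx : ∀ u, ‖sTxlam u‖ ≤ c * ‖sTlam u‖)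
    (hsplit : ∀ u, ‖sTlam u‖ ^ 2 = ‖sT u‖ ^ 2 + lam * ‖u‖ ^ 2) (h : H) :
    ‖rTxlam (Tx (Q (sT h)))‖ ≤ c * ((‖sT ∘L Q‖ ^ 2 + lam) * ‖h‖) := by
  set N := ‖sT ∘L Q‖
  have hsTlam : ‖sTlam (Q (sT h))‖ ≤ (N ^ 2 + lam) * ‖h‖ := by
    refine (sq_le_sq₀ (norm_nonneg _) (by positivity)).mp ?_
    have hcross : 0 ≤ lam * N ^ 2 * ‖h‖ ^ 2 + lam ^ 2 * ‖h‖ ^ 2 := by positivity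
    calc ‖sTlam (Q (sT h))‖ ^ 2 = ‖sT (Q (sT h))‖ ^ 2 + lam * ‖Q (sT h)‖ ^ 2 := hsplit _
      _ ≤ (N ^ 2 * ‖h‖) ^ 2 + lam * (N * ‖h‖) ^ 2 := by
        gcongr
        exacts [hQ.norm_apply_apply_apply_le hsT h, hQ.norm_apply_apply_le hsT h]
      _ ≤ ((N ^ 2 + lam) * ‖h‖) ^ 2 := by nlinarith
  exact (hrTx _).trans ((hsTx _).trans (mul_le_mul_of_nonneg_left hsTlam hc))

theorem norm_apply_proj_apply_le_of_norm_apply_le {Q sT T Tx rTlam rTxlam : H →L[ℝ] H}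
    (hQ : IsStarProjection Q) (hsT : IsSelfAdjoint sT) {κ c : ℝ} (hc : 0 ≤ c)
    (hrTx : ∀ u, ‖rTxlam u‖ ≤ c * ‖rTlam u‖) (hrT : ∀ u, ‖rTlam (T u)‖ ≤ ‖sT u‖)
    (hκ : ∀ u, ‖sT u‖ ≤ κ * ‖u‖) (h : H) :
    ‖rTxlam (Tx (Q (sT h)))‖ ≤ c * ((κ * ‖rTlam ∘L (T - Tx)‖ + ‖sT ∘L Q‖ ^ 2) * ‖h‖) := by
  set u := Q (sT h)
  have hu : ‖u‖ ≤ κ * ‖h‖ :=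
    ((Q.le_opNorm _).trans (mul_le_of_le_one_left (norm_nonneg _) (hQ.norm_le Q))).trans (hκ h)
  calc ‖rTxlam (Tx u)‖ ≤ c * ‖rTlam (Tx u)‖ := hrTx _
    _ = c * ‖rTlam (T u) - (rTlam ∘L (T - Tx)) u‖ := by simp
    _ ≤ c * (‖sT u‖ + ‖rTlam ∘L (T - Tx)‖ * ‖u‖) := by
      gcongr
      exact (norm_sub_le _ _).trans (add_le_add (hrT u) ((rTlam ∘L (T - Tx)).le_opNorm u))
    _ ≤ c * (‖sT ∘L Q‖ ^ 2 * ‖h‖ + ‖rTlam ∘L (T - Tx)‖ * (κ * ‖h‖)) := by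
      gcongr
      exact hQ.norm_apply_apply_apply_le hsT h
    _ = c * ((κ * ‖rTlam ∘L (T - Tx)‖ + ‖sT ∘L Q‖ ^ 2) * ‖h‖) := by ring

end Regularization

theorem sample_projection_error_bound_general
    {H : Type*} [NormedAddCommGroup H] [InnerProductSpace ℝ H] [CompleteSpace H]
    [SecondCountableTopology H] [MeasurableSpace H]
    (n : ℕ)
    -- the marginal distribution
    (ρX : Measure H) [IsProbabilityMeasure ρX]
    (κ : ℝ) (hκ : 1 ≤ κ)
    (hbound : ∀ᵐ x ∂ρX, ∀ᵐ x' ∂ρX, ⟪x, x'⟫ ≤ κ ^ 2)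
    -- `S_ρ`, the covariance operator `T`, and the integral operator `ℒ`
    (Sρ : H →L[ℝ] Lp ℝ 2 ρX)
    (hSρ : ∀ v : H, (Sρ v : H → ℝ) =ᵐ[ρX] (fun x => ⟪v, x⟫))
    (T : H →L[ℝ] H) (hT : T = (ContinuousLinearMap.adjoint Sρ).comp Sρ)
    (Lop : Lp ℝ 2 ρX →L[ℝ] Lp ℝ 2 ρX)
    (hLop : Lop = Sρ.comp (ContinuousLinearMap.adjoint Sρ))
    -- `f_H`, the projection of the regression function onto the hypothesis space
    (fH : Lp ℝ 2 ρX)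
    -- the source condition `f_H = ℒ^ζ g₀`, `‖g₀‖_ρ ≤ R`
    (ζ R : ℝ) (hζ : 0 ≤ ζ)
    (Lpow : ℝ → Lp ℝ 2 ρX →L[ℝ] Lp ℝ 2 ρX) (hLpow : IsPowers Lop Lpow)
    (g₀ : Lp ℝ 2 ρX) (hg₀ : ‖g₀‖ ≤ R) (hsource : fH = Lpow ζ g₀)
    -- an orthonormal eigendecomposition of `T`
    {ι : Type*} (e : HilbertBasis ι ℝ H) (μT : ι → ℝ) (hμT : ∀ i, 0 ≤ μT i)
    (hTe : ∀ i, T (e i) = μT i • e i)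
    -- the regularization parameter and `ω_⋆^λ = G_λ(T) S_ρ* f_H`
    (lam : ℝ) (hlam : 0 < lam)
    (ωstar : H)
    (hωstar : ∀ i, ⟪ωstar, e i⟫ =
      if lam ≤ μT i then (μT i)⁻¹ * ⟪(ContinuousLinearMap.adjoint Sρ) fH, e i⟫ else 0)
    -- the fixed sample, sampling operator and empirical covariance operator
    (x : Fin n → H)
    (Sx : H →L[ℝ] EuclideanSpace ℝ (Fin n))
    (ybar : EuclideanSpace ℝ (Fin n))
    (Tx : H →L[ℝ] H)
    {ι' : Type*} (ex : HilbertBasis ι' ℝ H) (μx : ι' → ℝ) (hμx : ∀ j, 0 ≤ μx j)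
    (hTxe : ∀ j, Tx (ex j) = μx j • ex j)
    -- the projection `P` onto a closed subspace of `H`
    (P : H →L[ℝ] H) (hPsa : IsSelfAdjoint P) (hPidem : P.comp P = P)
    -- fractional powers of `T`, `T+λI` and `T_x+λI` (via the eigenbases)
    (sT : H →L[ℝ] H) (hsT : ∀ i, sT (e i) = Real.sqrt (μT i) • e i)
    (sTlam : H →L[ℝ] H) (hsTlam : ∀ i, sTlam (e i) = Real.sqrt (μT i + lam) • e i)
    (rTlam : H →L[ℝ] H) (hrTlam : ∀ i, rTlam (e i) = (Real.sqrt (μT i + lam))⁻¹ • e i)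
    (sTxlam : H →L[ℝ] H) (hsTxlam : ∀ j, sTxlam (ex j) = Real.sqrt (μx j + lam) • ex j)
    (rTxlam : H →L[ℝ] H) (hrTxlam : ∀ j, rTxlam (ex j) = (Real.sqrt (μx j + lam))⁻¹ • ex j)
    -- the random quantities `Δ₁,…,Δ₅`
    (Δ1 : ℝ) (hΔ1 : Δ1 = max 1 (max (‖rTxlam.comp sTlam‖ ^ 2) (‖sTxlam.comp rTlam‖ ^ 2)))
    (Δ2 : ℝ) (hΔ2 : Δ2 = ‖rTlam (Tx ωstar - (ContinuousLinearMap.adjoint Sx) ybar)‖)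
    (Δ4 : ℝ) (hΔ4 : Δ4 = ‖rTlam.comp (T - Tx)‖)
    (Δ5 : ℝ) (hΔ5 : Δ5 = ‖sT.comp (1 - P)‖ ^ 2) :
    ((ζ ≤ 1 →
      ‖rTxlam ((ContinuousLinearMap.adjoint Sx) ybar - Tx (P ωstar))‖ ≤
        Δ1 ^ (1 / 2 : ℝ) * Δ2 + Δ1 ^ (1 / 2 : ℝ) * R * (Δ5 + lam) * lam ^ (ζ - 1)) ∧
    (1 < ζ →
      ‖rTxlam ((ContinuousLinearMap.adjoint Sx) ybar - Tx (P ωstar))‖ ≤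
        Δ1 ^ (1 / 2 : ℝ) * Δ2 +
          Δ1 ^ (1 / 2 : ℝ) * R * (κ * Δ4 + Δ5) * κ ^ (2 * (ζ - 1)))) := by
  subst hT hLop hsource hΔ2 hΔ4 hΔ5
  have hQ : IsStarProjection (1 - P) := IsStarProjection.one_sub ⟨hPidem, hPsa⟩
  have hsTsa := e.isSelfAdjoint_of_apply_eq_smul hsT
  have hsqrt_ne : ∀ i, √(μT i + lam) ≠ 0 := fun i => by have := hμT i; positivity
  have hc : 0 ≤ Δ1 ^ (1 / 2 : ℝ) := Real.rpow_nonneg (hΔ1 ▸ zero_le_one.trans (le_max_left _ _)) _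
  have hrTx : ∀ w, ‖rTxlam w‖ ≤ Δ1 ^ (1 / 2 : ℝ) * ‖rTlam w‖ :=
    norm_apply_le_rpow_half_mul_of_apply_apply_eq_self (e.apply_apply_eq_self_of_mul_eq_one
      hsTlam hrTlam fun i => mul_inv_cancel₀ (hsqrt_ne i))
      (hΔ1 ▸ (le_max_left _ _).trans (le_max_right _ _))
  have hsTx : ∀ w, ‖sTxlam w‖ ≤ Δ1 ^ (1 / 2 : ℝ) * ‖sTlam w‖ :=
    norm_apply_le_rpow_half_mul_of_apply_apply_eq_self (e.apply_apply_eq_self_of_mul_eq_one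
      hrTlam hsTlam fun i => inv_mul_cancel₀ (hsqrt_ne i))
      (hΔ1 ▸ (le_max_right _ _).trans (le_max_right _ _))
  have hsplit := norm_apply_sub_apply_le_add (X := Tx) (P := P) hrTx (adjoint Sx ybar) ωstar
  refine ⟨fun hζ1 => ?_, fun hζ1 => ?_⟩
  · obtain ⟨h, rfl, hh⟩ := exists_sqrt_apply_eq_and_norm_le_of_source hTe hLpow hζ g₀ hlam
      hωstar hsT (Real.rpow_nonneg hlam.le _)
      fun i hi => Real.rpow_le_rpow_of_nonpos hlam hi (by linarith)
    have hbias := norm_apply_proj_apply_le_of_norm_sq_eq hQ hsTsa hlam.le hc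
      (ex.norm_apply_apply_le_of_sqrt_le hμx hlam.le hTxe hrTxlam hsTxlam
        fun j => Real.sqrt_le_sqrt (by linarith)) hsTx
      (e.norm_sq_apply_eq_add hsTlam hsT fun i => by
        rw [Real.sq_sqrt (by linarith [hμT i]), Real.sq_sqrt (hμT i)]) h
    calc _ ≤ _ := hsplit
      _ ≤ Δ1 ^ (1 / 2 : ℝ) * ‖rTlam (Tx (sT h) - adjoint Sx ybar)‖ +
          Δ1 ^ (1 / 2 : ℝ) * ((‖sT ∘L (1 - P)‖ ^ 2 + lam) * (lam ^ (ζ - 1) * R)) := by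
        gcongr
        exact hbias.trans (by gcongr; exact hh.trans (by gcongr))
      _ = _ := by ring
  · have hκ0 : 0 ≤ κ := zero_le_one.trans hκ
    have hμκ := fun i => eigenvalue_le_sq_of_ae_inner_le hκ0 hbound hSρ (e.orthonormal.1 i) (hTe i)
    obtain ⟨h, rfl, hh⟩ := exists_sqrt_apply_eq_and_norm_le_of_source hTe hLpow hζ g₀ hlam
      hωstar hsT (D := κ ^ (2 * (ζ - 1))) (Real.rpow_nonneg hκ0 _) fun i _ => by
        rw [Real.rpow_mul hκ0, Real.rpow_two]
        exact Real.rpow_le_rpow (hμT i) (hμκ i) (by linarith)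
    have hbias := norm_apply_proj_apply_le_of_norm_apply_le (Tx := Tx) hQ hsTsa hc hrTx
      (e.norm_apply_apply_le_of_sqrt_le hμT hlam.le hTe hrTlam hsT fun _ => le_rfl)
      (e.norm_apply_le_of_abs_le_const hsT hκ0 fun i => by
        rw [abs_of_nonneg (Real.sqrt_nonneg _), ← Real.sqrt_sq hκ0]
        exact Real.sqrt_le_sqrt (hμκ i)) h
    calc _ ≤ _ := hsplit
      _ ≤ Δ1 ^ (1 / 2 : ℝ) * ‖rTlam (Tx (sT h) - adjoint Sx ybar)‖ +
          Δ1 ^ (1 / 2 : ℝ) * ((κ * ‖rTlam ∘L (adjoint Sρ ∘L Sρ - Tx)‖ + ‖sT ∘L (1 - P)‖ ^ 2) *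
            (κ ^ (2 * (ζ - 1)) * R)) := by
        gcongr
        exact hbias.trans (by gcongr; exact hh.trans (by gcongr))
      _ = _ := by ring

theorem sample_projection_error_bound
    {H : Type*} [NormedAddCommGroup H] [InnerProductSpace ℝ H] [CompleteSpace H]
    [SecondCountableTopology H] [MeasurableSpace H] [BorelSpace H]
    (n : ℕ) (hn : 0 < n)
    -- the marginal distribution
    (ρX : Measure H) [IsProbabilityMeasure ρX]
    (hsupp : ∃ K : Set H, IsCompact K ∧ ρX Kᶜ = 0)
    (κ : ℝ) (hκ : 1 ≤ κ)
    (hbound : ∀ᵐ x ∂ρX, ∀ᵐ x' ∂ρX, ⟪x, x'⟫ ≤ κ ^ 2)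
    -- `S_ρ`, the covariance operator `T`, and the integral operator `ℒ`
    (Sρ : H →L[ℝ] Lp ℝ 2 ρX)
    (hSρ : ∀ v : H, (Sρ v : H → ℝ) =ᵐ[ρX] (fun x => ⟪v, x⟫))
    (T : H →L[ℝ] H) (hT : T = (ContinuousLinearMap.adjoint Sρ).comp Sρ)
    (Lop : Lp ℝ 2 ρX →L[ℝ] Lp ℝ 2 ρX)
    (hLop : Lop = Sρ.comp (ContinuousLinearMap.adjoint Sρ))
    -- `f_H`, the projection of the regression function onto the hypothesis space
    (fρL fH : Lp ℝ 2 ρX)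
    (hfHmem : fH ∈ (LinearMap.range (Sρ : H →ₗ[ℝ] Lp ℝ 2 ρX)).topologicalClosure)
    (hfHproj : ∀ v : H, ⟪fρL - fH, Sρ v⟫ = 0)
    -- the source condition `f_H = ℒ^ζ g₀`, `‖g₀‖_ρ ≤ R`
    (ζ R : ℝ) (hζ : 0 ≤ ζ) (hR : 0 < R)
    (Lpow : ℝ → Lp ℝ 2 ρX →L[ℝ] Lp ℝ 2 ρX) (hLpow : IsPowers Lop Lpow)
    (g₀ : Lp ℝ 2 ρX) (hg₀ : ‖g₀‖ ≤ R) (hsource : fH = Lpow ζ g₀)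
    -- an orthonormal eigendecomposition of `T`
    {ι : Type*} (e : HilbertBasis ι ℝ H) (μT : ι → ℝ) (hμT : ∀ i, 0 ≤ μT i)
    (hTe : ∀ i, T (e i) = μT i • e i)
    -- the regularization parameter and `ω_⋆^λ = G_λ(T) S_ρ* f_H`
    (lam : ℝ) (hlam : 0 < lam)
    (ωstar : H)
    (hωstar : ∀ i, ⟪ωstar, e i⟫ =
      if lam ≤ μT i then (μT i)⁻¹ * ⟪(ContinuousLinearMap.adjoint Sρ) fH, e i⟫ else 0)
    -- the fixed sample, sampling operator and empirical covariance operator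
    (x : Fin n → H) (hx : ∀ i, ⟪x i, x i⟫ ≤ κ ^ 2) (y : Fin n → ℝ)
    (Sx : H →L[ℝ] EuclideanSpace ℝ (Fin n))
    (hSx : ∀ v i, Sx v i = (Real.sqrt n)⁻¹ * ⟪v, x i⟫)
    (ybar : EuclideanSpace ℝ (Fin n)) (hybar : ∀ i, ybar i = (Real.sqrt n)⁻¹ * y i)
    (Tx : H →L[ℝ] H) (hTx : Tx = (ContinuousLinearMap.adjoint Sx).comp Sx)
    {ι' : Type*} (ex : HilbertBasis ι' ℝ H) (μx : ι' → ℝ) (hμx : ∀ j, 0 ≤ μx j)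
    (hTxe : ∀ j, Tx (ex j) = μx j • ex j)
    -- the projection `P` onto a closed subspace of `H`
    (P : H →L[ℝ] H) (hPsa : IsSelfAdjoint P) (hPidem : P.comp P = P)
    -- fractional powers of `T`, `T+λI` and `T_x+λI` (via the eigenbases)
    (sT : H →L[ℝ] H) (hsT : ∀ i, sT (e i) = Real.sqrt (μT i) • e i)
    (sTlam : H →L[ℝ] H) (hsTlam : ∀ i, sTlam (e i) = Real.sqrt (μT i + lam) • e i)
    (rTlam : H →L[ℝ] H) (hrTlam : ∀ i, rTlam (e i) = (Real.sqrt (μT i + lam))⁻¹ • e i)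
    (sTxlam : H →L[ℝ] H) (hsTxlam : ∀ j, sTxlam (ex j) = Real.sqrt (μx j + lam) • ex j)
    (rTxlam : H →L[ℝ] H) (hrTxlam : ∀ j, rTxlam (ex j) = (Real.sqrt (μx j + lam))⁻¹ • ex j)
    -- the random quantities `Δ₁,…,Δ₅`
    (Δ1 : ℝ) (hΔ1 : Δ1 = max 1 (max (‖rTxlam.comp sTlam‖ ^ 2) (‖sTxlam.comp rTlam‖ ^ 2)))
    (Δ2 : ℝ) (hΔ2 : Δ2 = ‖rTlam (Tx ωstar - (ContinuousLinearMap.adjoint Sx) ybar)‖)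
    (Δ3 : ℝ) (hΔ3 : Δ3 = Real.sqrt (∑' i, ‖(Tx - T) (e i)‖ ^ 2))
    (Δ4 : ℝ) (hΔ4 : Δ4 = ‖rTlam.comp (T - Tx)‖)
    (Δ5 : ℝ) (hΔ5 : Δ5 = ‖sT.comp (1 - P)‖ ^ 2) :
    ((ζ ≤ 1 →
      ‖rTxlam ((ContinuousLinearMap.adjoint Sx) ybar - Tx (P ωstar))‖ ≤
        Δ1 ^ (1 / 2 : ℝ) * Δ2 + Δ1 ^ (1 / 2 : ℝ) * R * (Δ5 + lam) * lam ^ (ζ - 1)) ∧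
    (1 < ζ →
      ‖rTxlam ((ContinuousLinearMap.adjoint Sx) ybar - Tx (P ωstar))‖ ≤
        Δ1 ^ (1 / 2 : ℝ) * Δ2 +
          Δ1 ^ (1 / 2 : ℝ) * R * (κ * Δ4 + Δ5) * κ ^ (2 * (ζ - 1)))) :=
  sample_projection_error_bound_general n ρX κ hκ hbound Sρ hSρ T hT Lop hLop fH ζ R hζ Lpow hLpow
    g₀ hg₀ hsource e μT hμT hTe lam hlam ωstar hωstar x Sx ybar Tx ex μx hμx hTxe P hPsa hPidem sT
    hsT sTlam hsTlam rTlam hrTlam sTxlam hsTxlam rTxlam hrTxlam Δ1 hΔ1 Δ2 hΔ2 Δ4 hΔ4 Δ5 hΔ5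
end
end
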